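/- arXiv:1201.3528 — 7 statements merged into one kernel-verified Lean document; each statement's English description precedes it below -/
import Mathlib

section
/- Let h(β) = f(β) + Σ_{j∈S} P(|β_j|) be the penalized objective, and assume P'₊(0) ≥ 0. Suppose β ∈ ℝ^p satisfies the stationarity condition: ∂_j f(β) + P'(|β_j|)·sgn(β_j) = 0 for every j ∈ S with β_j ≠ 0, |∂_j f(β)| ≤ P'₊(0) for every j ∈ S with β_j = 0, and ∂_j f(β) = 0 for every j ∉ S. Then every one-sided directional derivative of h at β is nonnegative: d_v h(β) = lim_{t→0⁺} (h(β+tv) − h(β))/t ≥ 0 for all v ∈ ℝ^p. -/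
open Filter Topology Set

/-!
Along a ray `t ↦ β + t • v`, each penalty term `P |β_j + t v_j|` has a right derivative at
`t = 0`: `P'(|β_j|) sgn(β_j) v_j` if `β_j ≠ 0`, and `P'₊(0) |v_j|` if `β_j = 0`, since then
`|t v_j| = t |v_j|` for `t ≥ 0`. Hence the one-sided directional derivative of `h` exists and
splits into a sum over coordinates of `v_j ∂_j f(β)` plus these terms. Off `S` the summand
vanishes, at `β_j ≠ 0` it vanishes by stationarity, and at `β_j = 0` it is at least
`(P'₊(0) - |∂_j f(β)|) |v_j| ≥ 0`.
-/

theorem Real.sign_eq_signType_sign (x : ℝ) : Real.sign x = SignType.sign x := by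
  rcases lt_trichotomy x 0 with hx | rfl | hx
  · simp [Real.sign_of_neg hx, _root_.sign_neg hx]
  · simp
  · simp [Real.sign_of_pos hx, _root_.sign_pos hx]

theorem ContinuousLinearMap.apply_eq_sum_smul_single {ι R M : Type*} [Fintype ι]
    [DecidableEq ι] [Semiring R] [TopologicalSpace R] [AddCommMonoid M] [Module R M]
    [TopologicalSpace M] (φ : (ι → R) →L[R] M) (v : ι → R) :
    φ v = ∑ i, v i • φ (Pi.single i 1) := by
  conv_lhs => rw [pi_eq_sum_univ' v, map_sum]
  simp only [map_smul]

theorem HasDerivWithinAt.tendsto_slope_Ioi {g : ℝ → ℝ} {L x : ℝ}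
    (h : HasDerivWithinAt g L (Ici x) x) : Tendsto (slope g x) (𝓝[>] x) (𝓝 L) :=
  (hasDerivWithinAt_iff_tendsto_slope' self_notMem_Ioi).mp (hasDerivWithinAt_Ioi_iff_Ici.mpr h)

/-- The right derivative at `t = 0` of `t ↦ P |x + t * y|`, where `P'` is the derivative of `P` on
`(0, ∞)` and `P0'` its right derivative at `0`. -/
noncomputable def penaltyDirDeriv (P' : ℝ → ℝ) (P0' x y : ℝ) : ℝ :=
  if x = 0 then P0' * |y| else P' |x| * Real.sign x * y

section Penalty

variable {P P' : ℝ → ℝ} {P0' : ℝ}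

theorem hasDerivWithinAt_penalty_abs_mul (hP0 : HasDerivWithinAt P P0' (Ici 0) 0) (y : ℝ) :
    HasDerivWithinAt (fun t => P |t * y|) (P0' * |y|) (Ici 0) 0 := by
  have hscale : HasDerivWithinAt (fun t : ℝ => t * |y|) |y| (Ici 0) 0 := by
    simpa using (hasDerivAt_mul_const |y|).hasDerivWithinAt
  have hmaps : MapsTo (fun t : ℝ => t * |y|) (Ici 0) (Ici 0) :=
    fun t ht => mul_nonneg ht (abs_nonneg y)
  have hcomp := (by simpa using hP0 : HasDerivWithinAt P P0' (Ici 0) (0 * |y|)).comp 0 hscale hmaps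
  refine hcomp.congr (fun t ht => ?_) (by simp)
  simp only [Function.comp_apply, abs_mul, abs_of_nonneg (mem_Ici.mp ht)]

theorem hasDerivAt_penalty_abs_add_mul {x : ℝ} (hx : x ≠ 0) (hP : HasDerivAt P (P' |x|) |x|)
    (y : ℝ) : HasDerivAt (fun t => P |x + t * y|) (P' |x| * Real.sign x * y) 0 := by
  have hline : HasDerivAt (fun t : ℝ => x + t * y) y 0 := by
    simpa using (hasDerivAt_mul_const y).const_add x
  have habs : HasDerivAt (|·|) (SignType.sign x : ℝ) (x + 0 * y) := by
    simpa using hasDerivAt_abs hx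
  have hcomp := (by simpa using hP : HasDerivAt P (P' |x|) |x + 0 * y|).comp 0 (habs.comp 0 hline)
  rw [Real.sign_eq_signType_sign, mul_assoc]
  exact hcomp

theorem hasDerivWithinAt_penalty_abs_add_mul (hP : ∀ t, 0 < t → HasDerivAt P (P' t) t)
    (hP0 : HasDerivWithinAt P P0' (Ici 0) 0) (x y : ℝ) :
    HasDerivWithinAt (fun t => P |x + t * y|) (penaltyDirDeriv P' P0' x y) (Ici 0) 0 := by
  unfold penaltyDirDeriv
  split_ifs with hx
  · simpa [hx] using hasDerivWithinAt_penalty_abs_mul hP0 y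
  · exact (hasDerivAt_penalty_abs_add_mul hx (hP _ (abs_pos.mpr hx)) y).hasDerivWithinAt

theorem penaltyDirDeriv_add_mul_nonneg {a x : ℝ} (h₁ : x ≠ 0 → a + P' |x| * Real.sign x = 0)
    (h₂ : x = 0 → |a| ≤ P0') (y : ℝ) : 0 ≤ y * a + penaltyDirDeriv P' P0' x y := by
  unfold penaltyDirDeriv
  split_ifs with hx
  · have hbound : |y| * |a| ≤ |y| * P0' := mul_le_mul_of_nonneg_left (h₂ hx) (abs_nonneg y)
    have hlow : -(|y| * |a|) ≤ y * a := abs_mul y a ▸ neg_abs_le (y * a)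
    linarith
  · exact le_of_eq (by linear_combination -y * h₁ hx)

end Penalty

theorem stationary_point_nonneg_directional_derivatives_general
    {p : ℕ} (S : Finset (Fin p))
    (f : (Fin p → ℝ) → ℝ) (f' : (Fin p → ℝ) → (Fin p → ℝ) →L[ℝ] ℝ)
    (P P' : ℝ → ℝ) (P0' : ℝ)
    (hf : ∀ β, HasFDerivAt f (f' β) β)
    (hP : ∀ t : ℝ, 0 < t → HasDerivAt P (P' t) t)
    (hP0 : HasDerivWithinAt P P0' (Set.Ici 0) 0)
    (β : Fin p → ℝ)
    (hstat1 : ∀ j ∈ S, β j ≠ 0 →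
      f' β (Pi.single j 1) + P' |β j| * Real.sign (β j) = 0)
    (hstat2 : ∀ j ∈ S, β j = 0 → |f' β (Pi.single j 1)| ≤ P0')
    (hstat3 : ∀ j ∉ S, f' β (Pi.single j 1) = 0) :
    ∀ v : Fin p → ℝ, ∃ L : ℝ, 0 ≤ L ∧
      Tendsto
        (fun t : ℝ =>
          ((f (β + t • v) + ∑ j ∈ S, P |(β + t • v) j|) -
            (f β + ∑ j ∈ S, P |β j|)) / t)
        (𝓝[>] (0 : ℝ)) (𝓝 L) := by
  intro v
  have hpenalty : ∀ j ∈ S, HasDerivWithinAt (fun t : ℝ => P |(β + t • v) j|)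
      (penaltyDirDeriv P' P0' (β j) (v j)) (Ici 0) 0 := fun j _ => by
    simpa using hasDerivWithinAt_penalty_abs_add_mul hP hP0 (β j) (v j)
  have hderiv := ((hf β).hasLineDerivAt v).hasDerivWithinAt.add (HasDerivWithinAt.fun_sum hpenalty)
  have hf'v : f' β v = ∑ j ∈ S, v j * f' β (Pi.single j 1) := by
    rw [(f' β).apply_eq_sum_smul_single v]
    exact (Finset.sum_subset (Finset.subset_univ S) fun j _ hj => by simp [hstat3 j hj]).symm
  refine ⟨_, ?_, hderiv.tendsto_slope_Ioi.congr fun t => ?_⟩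
  · rw [hf'v, ← Finset.sum_add_distrib]
    exact Finset.sum_nonneg fun j hj =>
      penaltyDirDeriv_add_mul_nonneg (hstat1 j hj) (hstat2 j hj) (v j)
  · simp [slope_def_field]

/-- If `β` satisfies the stationarity condition for the penalized objective
`h(β) = f(β) + ∑_{j ∈ S} P |β_j|` (with `P'₊(0) ≥ 0`), then every one-sided directional
derivative of `h` at `β` exists and is nonnegative. -/
theorem stationary_point_nonneg_directional_derivatives
    {p : ℕ} (S : Finset (Fin p))
    (f : (Fin p → ℝ) → ℝ) (f' : (Fin p → ℝ) → (Fin p → ℝ) →L[ℝ] ℝ)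
    (P P' : ℝ → ℝ) (P0' : ℝ)
    (hf : ∀ β, HasFDerivAt f (f' β) β)
    (hPmono : MonotoneOn P (Set.Ici 0))
    (hP : ∀ t : ℝ, 0 < t → HasDerivAt P (P' t) t)
    (hP0 : HasDerivWithinAt P P0' (Set.Ici 0) 0)
    (hP0nonneg : 0 ≤ P0')
    (β : Fin p → ℝ)
    (hstat1 : ∀ j ∈ S, β j ≠ 0 →
      f' β (Pi.single j 1) + P' |β j| * Real.sign (β j) = 0)
    (hstat2 : ∀ j ∈ S, β j = 0 → |f' β (Pi.single j 1)| ≤ P0')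
    (hstat3 : ∀ j ∉ S, f' β (Pi.single j 1) = 0) :
    ∀ v : Fin p → ℝ, ∃ L : ℝ, 0 ≤ L ∧
      Tendsto
        (fun t : ℝ =>
          ((f (β + t • v) + ∑ j ∈ S, P |(β + t • v) j|) -
            (f β + ∑ j ∈ S, P |β j|)) / t)
        (𝓝[>] (0 : ℝ)) (𝓝 L) :=
  stationary_point_nonneg_directional_derivatives_general S f f' P P' P0' hf hP hP0 β hstat1 hstat2
    hstat3
end

section
/- Let a > 0, η > 0, b ∈ ℝ, and 0 ≤ ρ ≤ a|b|η. Then β̂ = sgn(b)·[(|b| − η) + ((|b| + η)² − 4ρ/a)^{1/2}]/2 is well defined (the discriminant (|b|+η)² − 4ρ/a is nonnegative) and is a global minimizer of the log-penalized objective g(β) = (a/2)(β − b)² + ρ·ln(η + |β|). -/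
open Set

/-!
Since `(|β| - |b|)² ≤ (β - b)²`, the objective at `β` dominates the objective with data `|b|`
at `|β|`, so it suffices to minimise `h u = (a/2)(u - c)² + ρ ln(η + u)` over `u ≥ 0`, with
`c = |b|`. On `u > 0`,
`h' u = (a(u - c)(u + η) + ρ) / (η + u) = a(u - t)(u - t') / (η + u)`,
where `t ≥ 0 ≥ t'` are the roots `((c - η) ± √D)/2` of the quadratic, `D = (c + η)² - 4ρ/a`;
the condition `ρ ≤ a c η` is exactly `√D ≥ |c - η|`. Hence `h` decreases on `[0, t]` and
increases on `[t, ∞)`, and `β̂ = sgn(b) t` attains `h t`.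
-/

noncomputable section

def logPenaltyObjective (a b ρ η β : ℝ) : ℝ :=
  a / 2 * (β - b) ^ 2 + ρ * Real.log (η + |β|)

def logPenaltyRoot (a c ρ η : ℝ) : ℝ :=
  (c - η + √((c + η) ^ 2 - 4 * ρ / a)) / 2

end

section

variable {a c ρ η : ℝ}

theorem sq_sub_le_logPenalty_discriminant (ha : 0 < a) (hρ : ρ ≤ a * c * η) :
    (c - η) ^ 2 ≤ (c + η) ^ 2 - 4 * ρ / a := by
  have : 4 * ρ / a ≤ 4 * c * η := by
    rw [div_le_iff₀ ha]; linarith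
  linarith

theorem logPenalty_discriminant_nonneg (ha : 0 < a) (hρ : ρ ≤ a * c * η) :
    0 ≤ (c + η) ^ 2 - 4 * ρ / a :=
  (sq_nonneg _).trans (sq_sub_le_logPenalty_discriminant ha hρ)

theorem abs_sub_le_sqrt_logPenalty_discriminant (ha : 0 < a) (hρ : ρ ≤ a * c * η) :
    |c - η| ≤ √((c + η) ^ 2 - 4 * ρ / a) :=
  Real.sqrt_sq_eq_abs (c - η) ▸ Real.sqrt_le_sqrt (sq_sub_le_logPenalty_discriminant ha hρ)

theorem logPenaltyRoot_nonneg (ha : 0 < a) (hρ : ρ ≤ a * c * η) :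
    0 ≤ logPenaltyRoot a c ρ η := by
  have := (abs_le.mp (abs_sub_le_sqrt_logPenalty_discriminant ha hρ)).1
  unfold logPenaltyRoot
  linarith

theorem sub_le_logPenaltyRoot (ha : 0 < a) (hρ : ρ ≤ a * c * η) :
    c - η ≤ logPenaltyRoot a c ρ η := by
  have := (abs_le.mp (abs_sub_le_sqrt_logPenalty_discriminant ha hρ)).2
  unfold logPenaltyRoot
  linarith

theorem logPenaltyRoot_zero_zero (hη : 0 ≤ η) : logPenaltyRoot a 0 0 η = 0 := by
  simp [logPenaltyRoot, Real.sqrt_sq hη]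

theorem logPenalty_stationary_factor (ha : 0 < a) (hρ : ρ ≤ a * c * η) (u : ℝ) :
    a * (u - c) * (u + η) + ρ =
      a * (u - logPenaltyRoot a c ρ η) * (u - (c - η - logPenaltyRoot a c ρ η)) := by
  have hs : a * √((c + η) ^ 2 - 4 * ρ / a) ^ 2 = a * (c + η) ^ 2 - 4 * ρ := by
    rw [Real.sq_sqrt (logPenalty_discriminant_nonneg ha hρ)]
    field_simp
  unfold logPenaltyRoot
  linear_combination (1 / 4) * hs

theorem hasDerivAt_logPenaltyObjective {u : ℝ} (hη : 0 ≤ η) (hu : 0 < u) :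
    HasDerivAt (logPenaltyObjective a c ρ η) (a * (u - c) + ρ * (1 / (η + u))) u := by
  have hsq : HasDerivAt (fun β : ℝ => (β - c) ^ 2) (2 * (u - c)) u := by
    simpa using ((hasDerivAt_id u).sub_const c).fun_pow 2
  have hlog : HasDerivAt (fun β : ℝ => Real.log (η + |β|)) (1 / (η + |u|)) u :=
    ((hasDerivAt_abs_pos hu).const_add η).log (by positivity)
  rw [abs_of_pos hu] at hlog
  exact ((hsq.const_mul (a / 2)).fun_add (hlog.const_mul ρ)).congr_deriv (by ring)

theorem isMinOn_logPenaltyObjective (ha : 0 < a) (hη : 0 < η) (hρ : ρ ≤ a * c * η) :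
    IsMinOn (logPenaltyObjective a c ρ η) (Ici 0) (logPenaltyRoot a c ρ η) := by
  set t := logPenaltyRoot a c ρ η
  have hcont : Continuous (logPenaltyObjective a c ρ η) := by
    unfold logPenaltyObjective
    fun_prop (disch := intro; positivity)
  have hderiv : ∀ u, 0 < u → deriv (logPenaltyObjective a c ρ η) u =
      a * (u - t) * (u - (c - η - t)) / (η + u) := fun u hu => by
    rw [(hasDerivAt_logPenaltyObjective hη.le hu).deriv, ← logPenalty_stationary_factor ha hρ]
    field_simp
    ring
  have hdiff : DifferentiableOn ℝ (logPenaltyObjective a c ρ η) (Ioi 0) := fun u hu =>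
    (hasDerivAt_logPenaltyObjective hη.le hu).differentiableAt.differentiableWithinAt
  have ht0 : 0 ≤ t := logPenaltyRoot_nonneg ha hρ
  have ht' : c - η - t ≤ 0 := by linarith [sub_le_logPenaltyRoot ha hρ]
  refine isMinOn_Ici_of_deriv hcont.continuousAt hcont.continuousAt
    (hdiff.mono Ioo_subset_Ioi_self)
    (hdiff.mono (Ioi_subset_Ioi ht0)) ?_ ?_
  · rintro u ⟨hu0, hut⟩
    rw [hderiv u hu0]
    exact div_nonpos_of_nonpos_of_nonneg
      (mul_nonpos_of_nonpos_of_nonneg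
        (mul_nonpos_of_nonneg_of_nonpos ha.le (by linarith)) (by linarith)) (by linarith)
  · intro u (htu : t < u)
    rw [hderiv u (ht0.trans_lt htu)]
    exact div_nonneg (mul_nonneg (mul_nonneg ha.le (by linarith)) (by linarith)) (by linarith)

end

section

variable {a b ρ η : ℝ}

theorem logPenaltyObjective_abs_le (ha : 0 ≤ a) (β : ℝ) :
    logPenaltyObjective a |b| ρ η |β| ≤ logPenaltyObjective a b ρ η β := by
  have : (|β| - |b|) ^ 2 ≤ (β - b) ^ 2 := sq_le_sq.mpr (by
    simpa using abs_abs_sub_abs_le_abs_sub β b)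
  unfold logPenaltyObjective
  rw [abs_abs]
  gcongr

theorem logPenaltyObjective_sign_mul {t : ℝ} (ht : 0 ≤ t) (hb : b = 0 → t = 0) :
    logPenaltyObjective a b ρ η (Real.sign b * t) = logPenaltyObjective a |b| ρ η t := by
  unfold logPenaltyObjective
  rcases lt_trichotomy b 0 with hb' | rfl | hb'
  · rw [Real.sign_of_neg hb', abs_of_neg hb', abs_of_nonneg ht, neg_one_mul, abs_neg,
      abs_of_nonneg ht]
    ring
  · simp [hb rfl, Real.sign_zero]
  · rw [Real.sign_of_pos hb', abs_of_pos hb', one_mul]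

end

/-- For the log-penalized scalar problem
`g(β) = (a/2)(β − b)² + ρ·ln(η + |β|)` with `a > 0`, `η > 0` and `0 ≤ ρ ≤ a|b|η`,
the discriminant `(|b|+η)² − 4ρ/a` is nonnegative and
`β̂ = sgn(b)·[(|b| − η) + √((|b|+η)² − 4ρ/a)]/2` is a global minimizer of `g`. -/
theorem log_penalty_nonzero_minimizer
    (a η b ρ : ℝ) (ha : 0 < a) (hη : 0 < η) (hρ0 : 0 ≤ ρ) (hρ1 : ρ ≤ a * |b| * η)
    (g : ℝ → ℝ)
    (hg : ∀ β : ℝ, g β = a / 2 * (β - b) ^ 2 + ρ * Real.log (η + |β|))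
    (βh : ℝ)
    (hβh : βh = Real.sign b *
      ((|b| - η) + Real.sqrt ((|b| + η) ^ 2 - 4 * ρ / a)) / 2) :
    0 ≤ (|b| + η) ^ 2 - 4 * ρ / a ∧
    ∀ β : ℝ, g βh ≤ g β := by
  have hg' : g = logPenaltyObjective a b ρ η := funext hg
  have hβh' : βh = Real.sign b * logPenaltyRoot a |b| ρ η := by
    rw [hβh, logPenaltyRoot, mul_div_assoc]
  have hroot_zero : b = 0 → logPenaltyRoot a |b| ρ η = 0 := by
    rintro rfl
    obtain rfl : ρ = 0 := le_antisymm (by simpa using hρ1) hρ0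
    rw [abs_zero, logPenaltyRoot_zero_zero hη.le]
  refine ⟨logPenalty_discriminant_nonneg ha hρ1, fun β => ?_⟩
  rw [hg', hβh', logPenaltyObjective_sign_mul (logPenaltyRoot_nonneg ha hρ1) hroot_zero]
  exact (isMinOn_logPenaltyObjective ha hη hρ1 (abs_nonneg β)).trans
    (logPenaltyObjective_abs_le ha.le β)
end

section
/- Let a > 0, η > 0, b ∈ ℝ, and ρ ≥ a(η + |b|)²/4. Then β = 0 is a global minimizer of the log-penalized objective g(β) = (a/2)(β − b)² + ρ·ln(η + |β|). -/
/-! Writing `t = |β|` and `c = |b|`, the objective is bounded below by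
`f t = a/2 (t - c)² + ρ ln(η + t)` with equality at `β = 0`, since `(|β| - |b|)² ≤ (β - b)²`.
On `t > -η` we have `f' t = a(t - c) + ρ/(η + t)`, and `ρ ≥ a(η + c)²/4` makes
`(η + t) f' t ≥ a(t - c)(η + t) + a(η + c)²/4 = a (t - (c - η)/2)² ≥ 0`; so `f` is monotone and
`f 0 ≤ f t` for all `t ≥ 0`. -/

open Real Set

noncomputable def logPenaltyProfile (a η ρ c : ℝ) (t : ℝ) : ℝ :=
  a / 2 * (t - c) ^ 2 + ρ * log (η + t)

namespace logPenaltyProfile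

variable {a η ρ c : ℝ}

theorem hasDerivAt {x : ℝ} (hx : η + x ≠ 0) :
    HasDerivAt (logPenaltyProfile a η ρ c) (a * (x - c) + ρ / (η + x)) x := by
  have hsq := (((hasDerivAt_id x).sub_const c).pow 2).const_mul (a / 2)
  have hlog := ((hasDerivAt_id x).const_add η).log hx |>.const_mul ρ
  refine (hsq.add hlog).congr_deriv ?_
  simp only [id]
  ring

theorem deriv_nonneg (ha : 0 ≤ a) (hρ : a * (η + c) ^ 2 / 4 ≤ ρ) {x : ℝ} (hx : 0 < η + x) :
    0 ≤ a * (x - c) + ρ / (η + x) := by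
  have hnum : 0 ≤ a * (x - c) * (η + x) + ρ :=
    calc 0 ≤ a * (x - (c - η) / 2) ^ 2 := by positivity
      _ = a * (x - c) * (η + x) + a * (η + c) ^ 2 / 4 := by ring
      _ ≤ a * (x - c) * (η + x) + ρ := by linarith
  calc 0 ≤ (a * (x - c) * (η + x) + ρ) / (η + x) := by positivity
    _ = a * (x - c) + ρ / (η + x) := by field_simp

theorem monotoneOn (ha : 0 ≤ a) (hρ : a * (η + c) ^ 2 / 4 ≤ ρ) :
    MonotoneOn (logPenaltyProfile a η ρ c) (Ioi (-η)) := by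
  have hpos : ∀ x ∈ Ioi (-η), 0 < η + x := fun x hx => by rw [mem_Ioi] at hx; linarith
  refine monotoneOn_of_hasDerivWithinAt_nonneg (f' := fun x => a * (x - c) + ρ / (η + x))
    (convex_Ioi _)
    (fun x hx => (hasDerivAt (hpos x hx).ne').continuousAt.continuousWithinAt)
    (fun x hx => ?_) (fun x hx => ?_)
  · rw [interior_Ioi] at hx ⊢
    exact (hasDerivAt (hpos x hx).ne').hasDerivWithinAt
  · rw [interior_Ioi] at hx
    exact deriv_nonneg ha hρ (hpos x hx)

end logPenaltyProfile

/-- For the log-penalized scalar problem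
`g(β) = (a/2)(β − b)² + ρ·ln(η + |β|)` with `a > 0`, `η > 0` and `ρ ≥ a(η + |b|)²/4`,
the point `β = 0` is a global minimizer of `g`. -/
theorem log_penalty_zero_minimizer
    (a η b ρ : ℝ) (ha : 0 < a) (hη : 0 < η) (hρ : a * (η + |b|) ^ 2 / 4 ≤ ρ)
    (g : ℝ → ℝ)
    (hg : ∀ β : ℝ, g β = a / 2 * (β - b) ^ 2 + ρ * Real.log (η + |β|)) :
    ∀ β : ℝ, g 0 ≤ g β := by
  intro β
  have hprofile : logPenaltyProfile a η ρ |b| 0 ≤ logPenaltyProfile a η ρ |b| |β| :=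
    logPenaltyProfile.monotoneOn ha.le hρ (by simpa using hη)
      (by rw [mem_Ioi]; linarith [abs_nonneg β]) (abs_nonneg β)
  have hsq : (|β| - |b|) ^ 2 ≤ (β - b) ^ 2 := sq_le_sq.mpr (abs_abs_sub_abs_le_abs_sub β b)
  calc g 0 = logPenaltyProfile a η ρ |b| 0 := by simp [hg, logPenaltyProfile]
    _ ≤ logPenaltyProfile a η ρ |b| |β| := hprofile
    _ ≤ g β := by rw [hg, logPenaltyProfile]; gcongr
end

section
/- Let a > 0, b ∈ ℝ, and η ≥ |b| with η > 0. Then for every ρ ≥ a|b|η, the point β = 0 is the unique global minimizer of the log-penalized objective g(β) = (a/2)(β − b)² + ρ·ln(η + |β|); in particular there is no nonzero stationary point, so the solution path is continuous in ρ whenever η ≥ |b| (the nonzero branch given by sgn(b)·[(|b|−η) + ((|b|+η)² − 4ρ/a)^{1/2}]/2 meets 0 exactly at ρ = a|b|η). -/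
/-!
Write `t = |β| > 0`. Since `ρ ≥ a|b|η ≥ 0` and `log (η + t) - log η ≥ 0`, moving from `0` to `β`
raises the objective by at least `a t² / 2 - a|b| t + a|b| η (log (η + t) - log η)`. The bound
`log (1 + x) ≥ 2x / (x + 2)` turns this into at least `a t² (1/2 - |b| / (t + 2η))`, which is
positive because `|b| ≤ η`. At `ρ = a|b|η` the discriminant of the nonzero branch is the perfect
square `(η - |b|)²`, so the branch equals `0` there.
-/

open Real

lemma two_mul_div_le_log_add_sub_log {η t : ℝ} (hη : 0 < η) (ht : 0 ≤ t) :
    2 * t / (t + 2 * η) ≤ log (η + t) - log η := by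
  have h := le_log_one_add_of_nonneg (div_nonneg ht hη.le)
  have hx : 2 * (t / η) / (t / η + 2) = 2 * t / (t + 2 * η) := by field_simp
  have hl : log (1 + t / η) = log (η + t) - log η := by
    rw [← log_div (by positivity) hη.ne']; congr 1; field_simp
  rwa [hx, hl] at h

lemma mul_sub_lt_mul_log_add_sub_log {a η c t : ℝ} (ha : 0 < a) (hη : 0 < η)
    (hc : 0 ≤ c) (hcη : c ≤ η) (ht : 0 < t) :
    a * c * t - a / 2 * t ^ 2 < a * c * η * (log (η + t) - log η) := by
  have hlog := two_mul_div_le_log_add_sub_log hη ht.le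
  have hden : 0 < t + 2 * η := by positivity
  calc a * c * t - a / 2 * t ^ 2
      < a * c * t - a * c * t ^ 2 / (t + 2 * η) := by
        have hratio : c / (t + 2 * η) < 1 / 2 := by rw [div_lt_iff₀ hden]; linarith
        have h2 : a * t ^ 2 * (c / (t + 2 * η)) < a * t ^ 2 * (1 / 2) :=
          mul_lt_mul_of_pos_left hratio (by positivity)
        have h3 : a * c * t ^ 2 / (t + 2 * η) = a * t ^ 2 * (c / (t + 2 * η)) := by ring
        linarith
    _ = a * c * η * (2 * t / (t + 2 * η)) := by field_simp; ring
    _ ≤ a * c * η * (log (η + t) - log η) := by gcongr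

lemma log_penalty_zero_lt {a η b ρ β : ℝ} (ha : 0 < a) (hη : 0 < η) (hbη : |b| ≤ η)
    (hρ : a * |b| * η ≤ ρ) (hβ : β ≠ 0) :
    a / 2 * (0 - b) ^ 2 + ρ * log (η + |0|) < a / 2 * (β - b) ^ 2 + ρ * log (η + |β|) := by
  have ht : 0 < |β| := abs_pos.mpr hβ
  have hgain := mul_sub_lt_mul_log_add_sub_log ha hη (abs_nonneg b) hbη ht
  have hlog : 0 ≤ log (η + |β|) - log η :=
    (div_nonneg (by positivity) (by positivity)).trans (two_mul_div_le_log_add_sub_log hη ht.le)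
  have hρgain : a * |b| * η * (log (η + |β|) - log η) ≤ ρ * (log (η + |β|) - log η) :=
    mul_le_mul_of_nonneg_right hρ hlog
  have hcross : a * (b * β) ≤ a * (|b| * |β|) :=
    mul_le_mul_of_nonneg_left (abs_mul b β ▸ le_abs_self _) ha.le
  rw [abs_zero, add_zero]
  nlinarith [sq_abs β]

/-- For the log-penalized scalar problem with `a > 0`, `η > 0` and
`η ≥ |b|`, for every `ρ ≥ a|b|η` the point `β = 0` is the unique global minimizer of
`g(β) = (a/2)(β − b)² + ρ·ln(η + |β|)`; moreover the nonzero branch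
`sgn(b)·[(|b|−η) + √((|b|+η)² − 4ρ/a)]/2` meets `0` exactly at `ρ = a|b|η`, so the
solution path is continuous whenever `η ≥ |b|`. -/
theorem log_penalty_continuous_path
    (a η b : ℝ) (ha : 0 < a) (hη : 0 < η) (hηb : |b| ≤ η)
    (g : ℝ → ℝ → ℝ)
    (hg : ∀ ρ β : ℝ, g ρ β = a / 2 * (β - b) ^ 2 + ρ * Real.log (η + |β|)) :
    (∀ ρ : ℝ, a * |b| * η ≤ ρ →
      ∀ β : ℝ, β ≠ 0 → g ρ 0 < g ρ β) ∧
    Real.sign b *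
      ((|b| - η) + Real.sqrt ((|b| + η) ^ 2 - 4 * (a * |b| * η) / a)) / 2 = 0 := by
  refine ⟨fun ρ hρ β hβ => ?_, ?_⟩
  · rw [hg, hg]
    exact log_penalty_zero_lt ha hη hηb hρ hβ
  · have hsquare : (|b| + η) ^ 2 - 4 * (a * |b| * η) / a = (η - |b|) ^ 2 := by
      field_simp
      ring
    rw [hsquare, Real.sqrt_sq (sub_nonneg.mpr hηb)]
    ring
end

section
/- Let a > 0, ρ > 0, η ∈ (1,2], and b ≠ 0. The power-family penalized objective g(β) = (a/2)(β − b)² + ρ|β|^η is strictly convex on ℝ and has a unique global minimizer β*. Moreover β* ≠ 0, sgn(β*) = sgn(b), and β* satisfies the estimating equation a(β* − b) + ρη|β*|^{η−1}·sgn(β*) = 0; i.e., for η > 1 shrinkage occurs but no thresholding to zero. -/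
/-!
The objective is the sum of a strictly convex quadratic and the convex penalty `ρ|β|^η`, and it is
coercive, so it has exactly one minimiser. For `η > 1` the penalty is differentiable at `0` with
derivative `0`, so the objective has derivative `-ab ≠ 0` there and `0` is not a minimiser. At the
minimiser the derivative vanishes, which is the estimating equation; multiplying it by `β*` gives
`a b β* ≥ a β*² > 0`, so `β*` has the sign of `b`.
-/

open Set Filter

theorem strictConvexOn_univ_mul_sub_sq {c : ℝ} (hc : 0 < c) (b : ℝ) :
    StrictConvexOn ℝ univ fun x : ℝ => c * (x - b) ^ 2 := by
  refine ⟨convex_univ, fun x _ y _ hxy p q hp hq hpq => ?_⟩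
  obtain rfl : q = 1 - p := by linarith
  have hgap : 0 < c * p * (1 - p) * (x - y) ^ 2 := by
    have := sub_ne_zero.mpr hxy
    positivity
  simp only [smul_eq_mul]
  linear_combination hgap

theorem convexOn_univ_abs_rpow {p : ℝ} (hp : 1 ≤ p) :
    ConvexOn ℝ univ fun x : ℝ => |x| ^ p := by
  have himage : (fun x : ℝ => |x|) '' univ = Ici 0 := by
    ext y
    simp only [image_univ, mem_range, mem_Ici]
    exact ⟨fun ⟨x, hx⟩ => hx ▸ abs_nonneg x, fun hy => ⟨y, abs_of_nonneg hy⟩⟩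
  have hmono : MonotoneOn (fun x : ℝ => x ^ p) (Ici 0) := fun x hx y _ hxy =>
    Real.rpow_le_rpow hx hxy (by linarith)
  rw [← himage] at hmono
  exact (himage ▸ convexOn_rpow hp).comp (convexOn_univ_norm (E := ℝ)) hmono

theorem abs_rpow_sub_two_mul_self (x p : ℝ) :
    |x| ^ (p - 2) * x = |x| ^ (p - 1) * Real.sign x := by
  rcases lt_trichotomy x 0 with hx | rfl | hx
  · rw [Real.sign_of_neg hx, show p - 1 = p - 2 + 1 by ring,
      Real.rpow_add_one (abs_ne_zero.mpr hx.ne), abs_of_neg hx]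
    ring
  · simp
  · rw [Real.sign_of_pos hx, show p - 1 = p - 2 + 1 by ring,
      Real.rpow_add_one (abs_ne_zero.mpr hx.ne'), abs_of_pos hx]
    ring

theorem Real.sign_eq_sign_of_mul_pos {x y : ℝ} (h : 0 < x * y) : Real.sign x = Real.sign y := by
  rcases pos_and_pos_or_neg_and_neg_of_mul_pos h with ⟨hx, hy⟩ | ⟨hx, hy⟩
  · rw [Real.sign_of_pos hx, Real.sign_of_pos hy]
  · rw [Real.sign_of_neg hx, Real.sign_of_neg hy]

section StrictConvexMin

variable {E : Type*} [AddCommGroup E] [Module ℝ E] {f : E → ℝ}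

theorem StrictConvexOn.lt_of_isMinOn {s : Set E} {x y : E} (hf : StrictConvexOn ℝ s f)
    (hmin : IsMinOn f s x) (hx : x ∈ s) (hy : y ∈ s) (hne : y ≠ x) : f x < f y :=
  (hmin hy).lt_of_ne fun h =>
    hne (hf.eq_of_isMinOn (fun _ hz => h ▸ hmin hz) hmin hy hx)

theorem StrictConvexOn.exists_forall_lt_of_tendsto_cocompact [TopologicalSpace E] [Nonempty E]
    (hf : StrictConvexOn ℝ univ f) (hcont : Continuous f)
    (hlim : Tendsto f (cocompact E) atTop) : ∃ x, ∀ y, y ≠ x → f x < f y := by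
  obtain ⟨x, hx⟩ := hcont.exists_forall_le hlim
  exact ⟨x, fun y => hf.lt_of_isMinOn (fun z _ => hx z) trivial trivial⟩

end StrictConvexMin

noncomputable def bridgeObjective (a b ρ η : ℝ) (β : ℝ) : ℝ :=
  a / 2 * (β - b) ^ 2 + ρ * |β| ^ η

namespace bridgeObjective

variable {a b ρ η : ℝ}

theorem strictConvexOn (ha : 0 < a) (hρ : 0 ≤ ρ) (hη : 1 ≤ η) :
    StrictConvexOn ℝ univ (bridgeObjective a b ρ η) :=
  (strictConvexOn_univ_mul_sub_sq (half_pos ha) b).add_convexOn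
    ((convexOn_univ_abs_rpow hη).smul hρ)

theorem continuous (hη : 0 ≤ η) : Continuous (bridgeObjective a b ρ η) := by
  unfold bridgeObjective
  fun_prop (disch := exact fun _ => Or.inr hη)

theorem tendsto_cocompact (ha : 0 < a) (hρ : 0 ≤ ρ) :
    Tendsto (bridgeObjective a b ρ η) (cocompact ℝ) atTop := by
  have hquad : Tendsto (fun β : ℝ => a / 2 * dist β b ^ 2) (cocompact ℝ) atTop :=
    ((tendsto_pow_atTop two_ne_zero).comp (tendsto_dist_right_cocompact_atTop b)).const_mul_atTop
      (half_pos ha)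
  refine tendsto_atTop_mono (fun β => ?_) hquad
  rw [Real.dist_eq, sq_abs]
  exact le_add_of_nonneg_right (by positivity)

theorem hasDerivAt (hη : 1 < η) (β : ℝ) :
    HasDerivAt (bridgeObjective a b ρ η)
      (a * (β - b) + ρ * η * |β| ^ (η - 1) * Real.sign β) β := by
  have hquad : HasDerivAt (fun β : ℝ => a / 2 * (β - b) ^ 2) (a * (β - b)) β := by
    refine ((((hasDerivAt_id β).sub_const b).pow 2).const_mul (a / 2)).congr_deriv ?_
    simp only [id_eq, Nat.cast_ofNat, Nat.add_one_sub_one, pow_one, mul_one]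
    ring
  refine (hquad.add ((hasDerivAt_abs_rpow β hη).const_mul ρ)).congr_deriv ?_
  rw [mul_assoc (η : ℝ), abs_rpow_sub_two_mul_self]
  ring

theorem estimatingEquation_of_isLocalMin (hη : 1 < η) {β : ℝ}
    (hβ : IsLocalMin (bridgeObjective a b ρ η) β) :
    a * (β - b) + ρ * η * |β| ^ (η - 1) * Real.sign β = 0 :=
  hβ.hasDerivAt_eq_zero (hasDerivAt hη β)

theorem ne_zero_of_isLocalMin (ha : 0 < a) (hb : b ≠ 0) (hη : 1 < η) {β : ℝ}
    (hβ : IsLocalMin (bridgeObjective a b ρ η) β) : β ≠ 0 := by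
  rintro rfl
  have := estimatingEquation_of_isLocalMin hη hβ
  simp only [Real.sign_zero, mul_zero, add_zero, zero_sub, mul_neg, neg_eq_zero] at this
  exact (mul_ne_zero ha.ne' hb) this

theorem sign_eq_of_isLocalMin (ha : 0 < a) (hρ : 0 ≤ ρ) (hb : b ≠ 0) (hη : 1 < η) {β : ℝ}
    (hβ : IsLocalMin (bridgeObjective a b ρ η) β) : Real.sign β = Real.sign b := by
  have hβ0 := ne_zero_of_isLocalMin ha hb hη hβ
  have hpen : 0 ≤ ρ * η * |β| ^ (η - 1) * (Real.sign β * β) :=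
    mul_nonneg (by have := hη.le; positivity) (Real.sign_mul_nonneg β)
  have hquad : 0 < a * β ^ 2 := by positivity
  have hprod : a * (β * b) = a * β ^ 2 + ρ * η * |β| ^ (η - 1) * (Real.sign β * β) := by
    linear_combination (-β) * estimatingEquation_of_isLocalMin hη hβ
  exact Real.sign_eq_sign_of_mul_pos (pos_of_mul_pos_right (by linarith) ha.le)

end bridgeObjective

theorem power_family_no_thresholding_general
    (a ρ η b : ℝ) (ha : 0 < a) (hρ : 0 < ρ) (hη1 : 1 < η) (hb : b ≠ 0)
    (g : ℝ → ℝ)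
    (hg : ∀ β : ℝ, g β = a / 2 * (β - b) ^ 2 + ρ * |β| ^ η) :
    StrictConvexOn ℝ Set.univ g ∧
    ∃ βs : ℝ,
      (∀ β : ℝ, β ≠ βs → g βs < g β) ∧
      βs ≠ 0 ∧
      Real.sign βs = Real.sign b ∧
      a * (βs - b) + ρ * η * |βs| ^ (η - 1) * Real.sign βs = 0 := by
  obtain rfl : g = bridgeObjective a b ρ η := funext hg
  have hconv := bridgeObjective.strictConvexOn (b := b) ha hρ.le hη1.le
  obtain ⟨βs, hβs⟩ := hconv.exists_forall_lt_of_tendsto_cocompact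
    (bridgeObjective.continuous (zero_le_one.trans hη1.le)) (bridgeObjective.tendsto_cocompact ha hρ.le)
  have hmin : IsLocalMin (bridgeObjective a b ρ η) βs :=
    Eventually.of_forall fun β => by
      rcases eq_or_ne β βs with rfl | hne
      exacts [le_rfl, (hβs β hne).le]
  exact ⟨hconv, βs, hβs, bridgeObjective.ne_zero_of_isLocalMin ha hb hη1 hmin,
    bridgeObjective.sign_eq_of_isLocalMin ha hρ.le hb hη1 hmin,
    bridgeObjective.estimatingEquation_of_isLocalMin hη1 hmin⟩

/-- For the power-family penalized objective
`g(β) = (a/2)(β − b)² + ρ|β|^η` with `a > 0`, `ρ > 0`, `η ∈ (1,2]` and `b ≠ 0`,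
`g` is strictly convex and has a unique global minimizer `β*`; moreover `β* ≠ 0`,
`sgn(β*) = sgn(b)`, and `β*` solves `a(β* − b) + ρη|β*|^{η−1}·sgn(β*) = 0`. -/
theorem power_family_no_thresholding
    (a ρ η b : ℝ) (ha : 0 < a) (hρ : 0 < ρ) (hη1 : 1 < η) (hη2 : η ≤ 2) (hb : b ≠ 0)
    (g : ℝ → ℝ)
    (hg : ∀ β : ℝ, g β = a / 2 * (β - b) ^ 2 + ρ * |β| ^ η) :
    StrictConvexOn ℝ Set.univ g ∧
    ∃ βs : ℝ,
      (∀ β : ℝ, β ≠ βs → g βs < g β) ∧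
      βs ≠ 0 ∧
      Real.sign βs = Real.sign b ∧
      a * (βs - b) + ρ * η * |βs| ^ (η - 1) * Real.sign βs = 0 :=
  power_family_no_thresholding_general a ρ η b ha hρ hη1 hb g hg
end

section
/- Consider binary logistic regression with data x_1,…,x_n ∈ ℝ^p, y_1,…,y_n ∈ {0,1}, n ≥ 1, and negative log-likelihood f(β) = Σ_{i=1}^n [ln(1 + exp(x_iᵗβ)) − y_i·x_iᵗβ]. Suppose the data are completely separated: there exists z ∈ ℝ^p such that x_iᵗz > 0 for all i with y_i = 1 and x_iᵗz < 0 for all i with y_i = 0. Then f(β) > 0 for every β ∈ ℝ^p, while f(tz) → 0 as t → ∞. Consequently inf_β f(β) = 0 and the infimum is not attained, i.e., the maximum likelihood estimator does not exist (the likelihood supremum occurs at infinity along direction z). -/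
open Filter Topology

/-!
Each summand of `f` is the softplus function `s ↦ log (1 + exp s)` evaluated at
`(1 - 2 yᵢ) xᵢᵗβ`, hence positive. Complete separation makes all these arguments negative
along `β = t z`, and they tend to `-∞` as `t → ∞`, where softplus tends to `0`. A positive
function with values tending to `0` has infimum `0` and no minimiser.
-/

namespace Real

noncomputable def softplus (s : ℝ) : ℝ := log (1 + exp s)

theorem softplus_pos (s : ℝ) : 0 < softplus s :=
  log_pos (lt_add_of_pos_right 1 (exp_pos s))

theorem softplus_sub_self (s : ℝ) : softplus s - s = softplus (-s) := by
  have h : 1 + exp (-s) = exp (-s) * (1 + exp s) := by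
    rw [mul_add, mul_one, ← exp_add, neg_add_cancel, exp_zero, add_comm]
  rw [softplus, softplus, h, log_mul (exp_ne_zero _) (by positivity), log_exp]
  ring

theorem tendsto_softplus_atBot : Tendsto softplus atBot (𝓝 0) := by
  have h : Tendsto (fun s => 1 + exp s) atBot (𝓝 1) := by
    simpa using tendsto_exp_atBot.const_add 1
  rw [← log_one]
  exact (continuousAt_log one_ne_zero).tendsto.comp h

theorem softplus_sub_mul_of_eq_zero_or_eq_one {y : ℝ} (hy : y = 0 ∨ y = 1) (s : ℝ) :
    softplus s - y * s = softplus ((1 - 2 * y) * s) := by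
  rcases hy with rfl | rfl
  · simp
  · rw [one_mul, softplus_sub_self]
    norm_num

theorem tendsto_softplus_mul_const_atTop {c : ℝ} (hc : c < 0) :
    Tendsto (fun t => softplus (t * c)) atTop (𝓝 0) :=
  tendsto_softplus_atBot.comp (tendsto_id.atTop_mul_const_of_neg hc)

end Real

open Real

theorem iInf_eq_zero_of_pos_of_tendsto {α β : Type*} {g : α → ℝ} {l : Filter β} [l.NeBot]
    {φ : β → α} (hpos : ∀ a, 0 < g a) (h : Tendsto (g ∘ φ) l (𝓝 0)) : ⨅ a, g a = 0 := by
  have hbdd : BddBelow (Set.range g) := ⟨0, by rintro _ ⟨a, rfl⟩; exact (hpos a).le⟩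
  exact le_antisymm (ge_of_tendsto h (.of_forall fun b => ciInf_le hbdd (φ b)))
    (iInf_nonneg fun a => (hpos a).le)

theorem not_exists_forall_le_of_pos_of_tendsto {α β : Type*} {g : α → ℝ} {l : Filter β}
    [l.NeBot] {φ : β → α} (hpos : ∀ a, 0 < g a) (h : Tendsto (g ∘ φ) l (𝓝 0)) :
    ¬ ∃ a, ∀ b, g a ≤ g b := by
  rintro ⟨a, ha⟩
  exact (hpos a).not_ge (ge_of_tendsto h (.of_forall fun b => ha (φ b)))

section Logistic

variable {ι κ : Type*} [Fintype ι] [Fintype κ]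

noncomputable def logisticNegLogLik (x : ι → κ → ℝ) (y : ι → ℝ) (β : κ → ℝ) : ℝ :=
  ∑ i, (softplus (x i ⬝ᵥ β) - y i * x i ⬝ᵥ β)

variable {x : ι → κ → ℝ} {y : ι → ℝ}

theorem logisticNegLogLik_eq_sum_softplus (hy : ∀ i, y i = 0 ∨ y i = 1) (β : κ → ℝ) :
    logisticNegLogLik x y β = ∑ i, softplus ((1 - 2 * y i) * x i ⬝ᵥ β) :=
  Finset.sum_congr rfl fun i _ => softplus_sub_mul_of_eq_zero_or_eq_one (hy i) _

theorem logisticNegLogLik_pos [Nonempty ι] (hy : ∀ i, y i = 0 ∨ y i = 1) (β : κ → ℝ) :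
    0 < logisticNegLogLik x y β := by
  rw [logisticNegLogLik_eq_sum_softplus hy]
  exact Finset.sum_pos (fun i _ => softplus_pos _) Finset.univ_nonempty

theorem tendsto_logisticNegLogLik_smul_atTop (hy : ∀ i, y i = 0 ∨ y i = 1) {z : κ → ℝ}
    (hsep : ∀ i, (y i = 1 → 0 < x i ⬝ᵥ z) ∧ (y i = 0 → x i ⬝ᵥ z < 0)) :
    Tendsto (fun t : ℝ => logisticNegLogLik x y (t • z)) atTop (𝓝 0) := by
  have hneg : ∀ i, (1 - 2 * y i) * x i ⬝ᵥ z < 0 := fun i => by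
    rcases hy i with h | h
    · simpa [h] using (hsep i).2 h
    · simp only [h]; linarith [(hsep i).1 h]
  simp_rw [logisticNegLogLik_eq_sum_softplus hy, dotProduct_smul, smul_eq_mul, mul_left_comm]
  simpa using tendsto_finsetSum Finset.univ fun i _ => tendsto_softplus_mul_const_atTop (hneg i)

end Logistic

/-- For binary logistic regression with negative log-likelihood
`f(β) = ∑ᵢ [ln(1 + exp(xᵢᵗβ)) − yᵢ·xᵢᵗβ]`, complete separation by some `z` implies
`f > 0` everywhere, `f(tz) → 0` as `t → ∞`, hence `inf f = 0` and the infimum is not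
attained (the MLE does not exist). -/
theorem logistic_complete_separation
    {n p : ℕ} (hn : 0 < n)
    (x : Fin n → Fin p → ℝ) (y : Fin n → ℝ)
    (hy : ∀ i, y i = 0 ∨ y i = 1)
    (f : (Fin p → ℝ) → ℝ)
    (hf : ∀ β, f β =
      ∑ i, (Real.log (1 + Real.exp (∑ j, x i j * β j)) - y i * ∑ j, x i j * β j))
    (z : Fin p → ℝ)
    (hsep : ∀ i, (y i = 1 → 0 < ∑ j, x i j * z j) ∧ (y i = 0 → ∑ j, x i j * z j < 0)) :
    (∀ β, 0 < f β) ∧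
    Tendsto (fun t : ℝ => f (t • z)) atTop (𝓝 0) ∧
    (⨅ β : Fin p → ℝ, f β) = 0 ∧
    ¬ ∃ β : Fin p → ℝ, ∀ γ : Fin p → ℝ, f β ≤ f γ := by
  obtain rfl : f = logisticNegLogLik x y := funext hf
  have : Nonempty (Fin n) := ⟨⟨0, hn⟩⟩
  have hpos : ∀ β, 0 < logisticNegLogLik x y β := logisticNegLogLik_pos hy
  have htend := tendsto_logisticNegLogLik_smul_atTop hy hsep
  exact ⟨hpos, htend, iInf_eq_zero_of_pos_of_tendsto hpos htend,
    not_exists_forall_le_of_pos_of_tendsto hpos htend⟩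
end

section
/- Path-following ODE in ρ: Let A = {1,…,q} be partitioned into unpenalized indices S̄ and active penalized indices S_Z̄. Let f : ℝ^q → ℝ be twice continuously differentiable, let I ⊆ ℝ be an open interval, and let P : (0,∞) × I → ℝ have continuous second partial derivatives ∂²P/∂t² and ∂²P/∂t∂ρ. Define the stationarity map F : U × I → ℝ^q on U = {β ∈ ℝ^q : β_j ≠ 0 for all j ∈ S_Z̄} by F_j(β,ρ) = ∂_j f(β) + (∂P/∂t)(|β_j|, ρ)·sgn(β_j) for j ∈ S_Z̄ and F_j(β,ρ) = ∂_j f(β) for j ∈ S̄, and define H(β,ρ) ∈ ℝ^{q×q} by H_{jk}(β,ρ) = ∂²_{jk} f(β) + (∂²P/∂t²)(|β_j|,ρ)·1_{j=k, j∈S_Z̄}. Suppose F(β⁰, ρ₀) = 0 and H(β⁰, ρ₀) is positive definite. Then there exist ε > 0 and a continuously differentiable curve β : (ρ₀ − ε, ρ₀ + ε) → U with β(ρ₀) = β⁰, F(β(ρ), ρ) = 0 for all ρ, and derivative dβ/dρ(ρ) = −H(β(ρ),ρ)^{-1}·u(β(ρ),ρ), where u_j(β,ρ) = (∂²P/∂t∂ρ)(|β_j|,ρ)·sgn(β_j)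 for j ∈ S_Z̄ and u_j(β,ρ) = 0 for j ∈ S̄. -/
/-!
On `U × I`, where `U = {β | β_j ≠ 0 for j ∈ S_Z̄}`, the map `(ρ, β) ↦ F(β, ρ)` is `C¹`: near a
point of `U` the sign `s = sgn β_j` is constant and `|β_j| = s β_j`, so the penalty term is
`s · ∂P/∂t(s β_j, ρ)`, which is jointly `C¹` because its two partial derivatives are continuous.
Its Jacobian is `(r, b) ↦ r u + H b`. As `H(β⁰, ρ₀)` is positive definite, hence invertible, the
implicit function theorem yields a `C¹` curve `β(ρ)` with `F(β(ρ), ρ) = 0`; differentiating this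
identity gives `u + H β' = 0`, and `H` stays invertible near `ρ₀` by continuity of the determinant.
-/

open Matrix Filter Topology ContinuousLinearMap

theorem Real.eventually_sign_eq_and_abs_eq {x : ℝ} (hx : x ≠ 0) :
    ∀ᶠ y in 𝓝 x, Real.sign y = Real.sign x ∧ |y| = Real.sign x * y := by
  rcases hx.lt_or_gt with hneg | hpos
  · filter_upwards [eventually_lt_nhds hneg] with y hy
    simp [Real.sign_of_neg hy, Real.sign_of_neg hneg, abs_of_neg hy]
  · filter_upwards [eventually_gt_nhds hpos] with y hy
    simp [Real.sign_of_pos hy, Real.sign_of_pos hpos, abs_of_pos hy]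

theorem Real.continuousAt_sign_of_ne_zero {x : ℝ} (hx : x ≠ 0) : ContinuousAt Real.sign x :=
  continuousAt_const.congr <| (Real.eventually_sign_eq_and_abs_eq hx).mono fun _ h => h.1.symm

theorem Real.sign_mul_self_of_ne_zero {x : ℝ} (hx : x ≠ 0) : Real.sign x * Real.sign x = 1 := by
  rcases Real.sign_apply_eq_of_ne_zero x hx with h | h <;> simp [h]

theorem hasDerivAt_comp_abs_mul_sign {g : ℝ → ℝ} {g' x : ℝ} (hx : x ≠ 0)
    (hg : HasDerivAt g g' |x|) : HasDerivAt (fun y => g |y| * Real.sign y) g' x := by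
  set s := Real.sign x
  have habs : |x| = s * x := ((Real.eventually_sign_eq_and_abs_eq hx).self_of_nhds).2
  rw [habs] at hg
  have h := (hg.comp x ((hasDerivAt_id x).const_mul s)).mul_const s
  rw [mul_one, mul_assoc, Real.sign_mul_self_of_ne_zero hx, mul_one] at h
  refine h.congr_of_eventuallyEq ?_
  filter_upwards [Real.eventually_sign_eq_and_abs_eq hx] with y hy
  simp only [Function.comp_apply, hy.1, hy.2, s]

theorem hasStrictFDerivAt_uncurry_of_hasDerivAt {F : Type*} [NormedAddCommGroup F]
    [NormedSpace ℝ F] {g g₁ g₂ : ℝ → ℝ → F} {z : ℝ × ℝ}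
    (h₁ : ∀ᶠ v in 𝓝 z, HasDerivAt (g · v.2) (g₁ v.1 v.2) v.1)
    (h₂ : ∀ᶠ v in 𝓝 z, HasDerivAt (g v.1 ·) (g₂ v.1 v.2) v.2)
    (c₁ : ContinuousAt (fun v : ℝ × ℝ => g₁ v.1 v.2) z)
    (c₂ : ContinuousAt (fun v : ℝ × ℝ => g₂ v.1 v.2) z) :
    HasStrictFDerivAt (fun v : ℝ × ℝ => g v.1 v.2)
      ((toSpanSingleton ℝ (g₁ z.1 z.2)).coprod (toSpanSingleton ℝ (g₂ z.1 z.2))) z :=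
  hasStrictFDerivAt_uncurry_coprod (f₁ := fun x r => toSpanSingleton ℝ (g₁ x r))
    (f₂ := fun x r => toSpanSingleton ℝ (g₂ x r))
    (h₁.mono fun _ h => h.hasFDerivAt) (h₂.mono fun _ h => h.hasFDerivAt)
    ((toSpanSingletonCLE (𝕜 := ℝ)).continuous.continuousAt.comp c₁)
    ((toSpanSingletonCLE (𝕜 := ℝ)).continuous.continuousAt.comp c₂)

section OddExtension

variable {I : Set ℝ} {x ρ : ℝ}

theorem continuousAt_comp_abs {g : ℝ → ℝ → ℝ} (hI : IsOpen I)
    (hg : ContinuousOn (fun z : ℝ × ℝ => g z.1 z.2) (Set.Ioi 0 ×ˢ I)) (hx : x ≠ 0) (hρ : ρ ∈ I) :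
    ContinuousAt (fun z : ℝ × ℝ => g |z.1| z.2) (x, ρ) := by
  have hmem : (|x|, ρ) ∈ Set.Ioi 0 ×ˢ I := ⟨abs_pos.2 hx, hρ⟩
  exact (hg.continuousAt ((isOpen_Ioi.prod hI).mem_nhds hmem)).comp
    (f := fun z : ℝ × ℝ => (|z.1|, z.2)) (x := (x, ρ)) (by fun_prop)

theorem hasStrictFDerivAt_comp_abs_mul_sign {g g₁ g₂ : ℝ → ℝ → ℝ} (hI : IsOpen I)
    (h₁ : ∀ ρ ∈ I, ∀ t, 0 < t → HasDerivAt (g · ρ) (g₁ t ρ) t)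
    (h₂ : ∀ t, 0 < t → ∀ ρ ∈ I, HasDerivAt (g t ·) (g₂ t ρ) ρ)
    (c₁ : ContinuousOn (fun z : ℝ × ℝ => g₁ z.1 z.2) (Set.Ioi 0 ×ˢ I))
    (c₂ : ContinuousOn (fun z : ℝ × ℝ => g₂ z.1 z.2) (Set.Ioi 0 ×ˢ I)) (hx : x ≠ 0) (hρ : ρ ∈ I) :
    HasStrictFDerivAt (fun z : ℝ × ℝ => g |z.1| z.2 * Real.sign z.1)
      ((toSpanSingleton ℝ (g₁ |x| ρ)).coprod (toSpanSingleton ℝ (g₂ |x| ρ * Real.sign x)))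
      (x, ρ) := by
  have hnhds : ∀ᶠ v : ℝ × ℝ in 𝓝 (x, ρ), v.1 ≠ 0 ∧ v.2 ∈ I :=
    ((isOpen_ne.preimage continuous_fst).inter (hI.preimage continuous_snd)).mem_nhds ⟨hx, hρ⟩
  refine hasStrictFDerivAt_uncurry_of_hasDerivAt (g := fun y r => g |y| r * Real.sign y)
    (g₁ := fun y r => g₁ |y| r) (g₂ := fun y r => g₂ |y| r * Real.sign y) ?_ ?_
    (continuousAt_comp_abs hI c₁ hx hρ) ((continuousAt_comp_abs hI c₂ hx hρ).mul
      (ContinuousAt.comp (g := Real.sign) (f := Prod.fst) (Real.continuousAt_sign_of_ne_zero hx)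
        continuousAt_fst))
  · filter_upwards [hnhds] with v hv
    exact hasDerivAt_comp_abs_mul_sign hv.1 (h₁ v.2 hv.2 _ (abs_pos.2 hv.1))
  · filter_upwards [hnhds] with v hv
    exact (h₂ _ (abs_pos.2 hv.1) v.2 hv.2).mul_const _

end OddExtension

theorem Matrix.isInvertible_toLin' {ι : Type*} [Fintype ι] [DecidableEq ι] {M : Matrix ι ι ℝ}
    (hM : IsUnit M.det) : (toLin' M).toContinuousLinearMap.IsInvertible :=
  .of_inverse (g := (toLin' M⁻¹).toContinuousLinearMap)
    (ContinuousLinearMap.ext fun b => by simp [mulVec_mulVec, mul_nonsing_inv M hM])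
    (ContinuousLinearMap.ext fun b => by simp [mulVec_mulVec, nonsing_inv_mul M hM])

theorem Matrix.eq_neg_inv_mulVec_of_add_mulVec_eq_zero {ι : Type*} [Fintype ι] [DecidableEq ι]
    {M : Matrix ι ι ℝ} {v w : ι → ℝ} (hM : IsUnit M.det) (h : w + M *ᵥ v = 0) :
    v = -(M⁻¹ *ᵥ w) := by
  rw [← mulVec_neg, ← eq_neg_of_add_eq_zero_right h, mulVec_mulVec, nonsing_inv_mul M hM,
    one_mulVec]

section Jacobian

variable {ι : Type*} [Fintype ι] [DecidableEq ι]

noncomputable def jacobianCLM (w : ι → ℝ) (M : Matrix ι ι ℝ) : ℝ × (ι → ℝ) →L[ℝ] ι → ℝ :=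
  (toSpanSingleton ℝ w).coprod (toLin' M).toContinuousLinearMap

@[simp]
theorem jacobianCLM_apply (w : ι → ℝ) (M : Matrix ι ι ℝ) (r : ℝ) (b : ι → ℝ) :
    jacobianCLM w M (r, b) = r • w + M *ᵥ b := by
  simp [jacobianCLM]

theorem jacobianCLM_comp_inr (w : ι → ℝ) (M : Matrix ι ι ℝ) :
    jacobianCLM w M ∘L inr ℝ ℝ (ι → ℝ) = (toLin' M).toContinuousLinearMap := by
  ext b : 1
  simp

theorem continuousOn_jacobianCLM {X : Type*} [TopologicalSpace X] {w : X → ι → ℝ}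
    {M : X → Matrix ι ι ℝ} {s : Set X} (hw : ContinuousOn w s) (hM : ContinuousOn M s) :
    ContinuousOn (fun x => jacobianCLM (w x) (M x)) s := by
  refine continuousOn_clm_apply.2 fun ⟨r, b⟩ => ?_
  simp only [jacobianCLM_apply]
  exact (hw.const_smul r).add
    ((continuous_id.matrix_mulVec continuous_const).comp_continuousOn hM)

end Jacobian

section CoordinateDerivatives

variable {ι : Type*} [Fintype ι] [DecidableEq ι] {f : (ι → ℝ) → ℝ} {β : ι → ℝ}

noncomputable def coordGradient (f : (ι → ℝ) → ℝ) (β : ι → ℝ) : ι → ℝ :=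
  fun j => fderiv ℝ f β (Pi.single j 1)

noncomputable def coordHessian (f : (ι → ℝ) → ℝ) (β : ι → ℝ) : Matrix ι ι ℝ :=
  Matrix.of fun j k => fderiv ℝ (fun b => fderiv ℝ f b (Pi.single k 1)) β (Pi.single j 1)

theorem coordHessian_apply (hf : DifferentiableAt ℝ (fderiv ℝ f) β) (j k : ι) :
    coordHessian f β j k = fderiv ℝ (fderiv ℝ f) β (Pi.single j 1) (Pi.single k 1) := by
  simp [coordHessian, fderiv_clm_apply hf (differentiableAt_const _)]

theorem hasFDerivAt_coordGradient (hf : ContDiffAt ℝ 2 f β) :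
    HasFDerivAt (coordGradient f) (toLin' (coordHessian f β)).toContinuousLinearMap β := by
  have hdiff : DifferentiableAt ℝ (fderiv ℝ f) β :=
    (hf.fderiv_right (m := 1) le_rfl).differentiableAt one_ne_zero
  have hsymm : IsSymmSndFDerivAt ℝ f β := hf.isSymmSndFDerivAt (by simp)
  have hD := hasFDerivAt_pi.2 fun j =>
    (ContinuousLinearMap.apply ℝ ℝ (Pi.single j (1 : ℝ))).hasFDerivAt.comp β hdiff.hasFDerivAt
  have hmatrix : coordHessian f β = LinearMap.toMatrix'
      (ContinuousLinearMap.pi fun j => (ContinuousLinearMap.apply ℝ ℝ (Pi.single j (1 : ℝ))).comp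
        (fderiv ℝ (fderiv ℝ f) β) : (ι → ℝ) →ₗ[ℝ] ι → ℝ) := by
    ext j k
    simp [coordHessian_apply hdiff, hsymm (Pi.single j 1)]
  rw [hmatrix, toLin'_toMatrix']
  exact hD

theorem continuous_coordHessian (hf : ContDiff ℝ 2 f) : Continuous (coordHessian f) := by
  have hdiff : Differentiable ℝ (fderiv ℝ f) :=
    (hf.fderiv_right (m := 1) le_rfl).differentiable one_ne_zero
  have hcont : Continuous (fderiv ℝ (fderiv ℝ f)) :=
    (hf.fderiv_right (m := 1) le_rfl).continuous_fderiv one_ne_zero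
  refine continuous_matrix fun j k => ?_
  simp only [coordHessian_apply (hdiff _)]
  fun_prop

end CoordinateDerivatives

section Penalty

variable {ι : Type*} (S : Finset ι) {I : Set ℝ}

def activeDomain (S : Finset ι) (I : Set ℝ) : Set (ℝ × (ι → ℝ)) :=
  I ×ˢ {β | ∀ j ∈ S, β j ≠ 0}

theorem isOpen_activeDomain (hI : IsOpen I) : IsOpen (activeDomain S I) := by
  refine hI.prod ?_
  simp only [Set.ofPred_forall]
  exact isOpen_biInter_finset fun j _ => isOpen_ne.preimage (continuous_apply j)

variable [DecidableEq ι]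

/-- With `g = ∂P/∂t`, this is the gradient of `β ↦ ∑ j ∈ S, P(|β j|, ρ)` on `activeDomain S I`. -/
noncomputable def penaltyGrad (g : ℝ → ℝ → ℝ) (β : ι → ℝ) (ρ : ℝ) : ι → ℝ :=
  fun j => if j ∈ S then g |β j| ρ * Real.sign (β j) else 0

def penaltyCurvature (g : ℝ → ℝ → ℝ) (β : ι → ℝ) (ρ : ℝ) : ι → ℝ :=
  fun j => if j ∈ S then g |β j| ρ else 0

variable {S} {g g₁ g₂ : ℝ → ℝ → ℝ} {z : ℝ × (ι → ℝ)}

theorem continuousAt_penaltyGrad (hI : IsOpen I)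
    (hg : ContinuousOn (fun z : ℝ × ℝ => g z.1 z.2) (Set.Ioi 0 ×ˢ I)) (hz : z ∈ activeDomain S I) :
    ContinuousAt (fun z : ℝ × (ι → ℝ) => penaltyGrad S g z.2 z.1) z := by
  refine continuousAt_pi.2 fun j => ?_
  by_cases hj : j ∈ S
  · simp only [penaltyGrad, hj, if_true]
    have hsign := (Real.continuousAt_sign_of_ne_zero (hz.2 j hj)).comp (f := Prod.fst)
      (x := (z.2 j, z.1)) continuousAt_fst
    exact ((continuousAt_comp_abs hI hg (hz.2 j hj) hz.1).mul hsign).comp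
      (f := fun z : ℝ × (ι → ℝ) => (z.2 j, z.1)) (by fun_prop)
  · simp only [penaltyGrad, hj, if_false]
    exact continuousAt_const

theorem continuousAt_penaltyCurvature (hI : IsOpen I)
    (hg : ContinuousOn (fun z : ℝ × ℝ => g z.1 z.2) (Set.Ioi 0 ×ˢ I)) (hz : z ∈ activeDomain S I) :
    ContinuousAt (fun z : ℝ × (ι → ℝ) => penaltyCurvature S g z.2 z.1) z := by
  refine continuousAt_pi.2 fun j => ?_
  by_cases hj : j ∈ S
  · simp only [penaltyCurvature, hj, if_true]
    exact (continuousAt_comp_abs hI hg (hz.2 j hj) hz.1).comp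
      (f := fun z : ℝ × (ι → ℝ) => (z.2 j, z.1)) (by fun_prop)
  · simp only [penaltyCurvature, hj, if_false]
    exact continuousAt_const

theorem hasFDerivAt_penaltyGrad [Fintype ι] (hI : IsOpen I)
    (h₁ : ∀ ρ ∈ I, ∀ t, 0 < t → HasDerivAt (g · ρ) (g₁ t ρ) t)
    (h₂ : ∀ t, 0 < t → ∀ ρ ∈ I, HasDerivAt (g t ·) (g₂ t ρ) ρ)
    (c₁ : ContinuousOn (fun z : ℝ × ℝ => g₁ z.1 z.2) (Set.Ioi 0 ×ˢ I))
    (c₂ : ContinuousOn (fun z : ℝ × ℝ => g₂ z.1 z.2) (Set.Ioi 0 ×ˢ I)) (hz : z ∈ activeDomain S I) :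
    HasFDerivAt (fun z : ℝ × (ι → ℝ) => penaltyGrad S g z.2 z.1)
      (jacobianCLM (penaltyGrad S g₂ z.2 z.1) (diagonal (penaltyCurvature S g₁ z.2 z.1))) z := by
  refine hasFDerivAt_pi'.2 fun j => ?_
  by_cases hj : j ∈ S
  · simp only [penaltyGrad, hj, if_true]
    have hcoord : HasFDerivAt (fun z : ℝ × (ι → ℝ) => (z.2 j, z.1))
        ((ContinuousLinearMap.proj j ∘L ContinuousLinearMap.snd ℝ ℝ (ι → ℝ)).prod
          (ContinuousLinearMap.fst ℝ ℝ (ι → ℝ))) z :=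
      ((ContinuousLinearMap.proj j ∘L ContinuousLinearMap.snd ℝ ℝ (ι → ℝ)).prod
        (ContinuousLinearMap.fst ℝ ℝ (ι → ℝ))).hasFDerivAt
    refine ((hasStrictFDerivAt_comp_abs_mul_sign hI h₁ h₂ c₁ c₂ (hz.2 j hj)
      hz.1).hasFDerivAt.comp z hcoord).congr_fderiv ?_
    refine ContinuousLinearMap.ext fun ⟨r, b⟩ => ?_
    simp only [ContinuousLinearMap.comp_apply, ContinuousLinearMap.prod_apply, coe_snd',
      proj_apply, coe_fst', coprod_apply, toSpanSingleton_apply, smul_eq_mul, jacobianCLM_apply,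
      Pi.add_apply, Pi.smul_apply, penaltyGrad, penaltyCurvature, hj, ↓reduceIte, mulVec_diagonal]
    ring
  · simp only [penaltyGrad, hj, if_false]
    refine (hasFDerivAt_const 0 z).congr_fderiv ?_
    refine ContinuousLinearMap.ext fun ⟨r, b⟩ => ?_
    simp [penaltyGrad, penaltyCurvature, mulVec_diagonal, hj]

end Penalty

theorem hasFDerivAt_coordGradient_add_penaltyGrad {ι : Type*} [Fintype ι] [DecidableEq ι]
    {S : Finset ι} {I : Set ℝ} {f : (ι → ℝ) → ℝ} {g g₁ g₂ : ℝ → ℝ → ℝ} {z : ℝ × (ι → ℝ)}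
    (hf : ContDiffAt ℝ 2 f z.2) (hI : IsOpen I)
    (h₁ : ∀ ρ ∈ I, ∀ t, 0 < t → HasDerivAt (g · ρ) (g₁ t ρ) t)
    (h₂ : ∀ t, 0 < t → ∀ ρ ∈ I, HasDerivAt (g t ·) (g₂ t ρ) ρ)
    (c₁ : ContinuousOn (fun z : ℝ × ℝ => g₁ z.1 z.2) (Set.Ioi 0 ×ˢ I))
    (c₂ : ContinuousOn (fun z : ℝ × ℝ => g₂ z.1 z.2) (Set.Ioi 0 ×ˢ I)) (hz : z ∈ activeDomain S I) :
    HasFDerivAt (fun z : ℝ × (ι → ℝ) => coordGradient f z.2 + penaltyGrad S g z.2 z.1)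
      (jacobianCLM (penaltyGrad S g₂ z.2 z.1)
        (coordHessian f z.2 + diagonal (penaltyCurvature S g₁ z.2 z.1))) z := by
  refine (((hasFDerivAt_coordGradient hf).comp z hasFDerivAt_snd).add
    (hasFDerivAt_penaltyGrad hI h₁ h₂ c₁ c₂ hz)).congr_fderiv ?_
  refine ContinuousLinearMap.ext fun ⟨r, b⟩ => ?_
  simp only [_root_.add_apply, jacobianCLM_apply, add_mulVec]
  simp only [ContinuousLinearMap.comp_apply, coe_snd', LinearMap.coe_toContinuousLinearMap',
    toLin'_apply]
  abel

theorem HasFDerivAt.apply_one_eq_zero_of_eventually_eq {E F : Type*} [NormedAddCommGroup E]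
    [NormedSpace ℝ E] [NormedAddCommGroup F] [NormedSpace ℝ F] {G : ℝ × E → F}
    {D : ℝ × E →L[ℝ] F} {ψ : ℝ → E} {ψ' : E} {ρ : ℝ} {c : F}
    (hG : HasFDerivAt G D (ρ, ψ ρ)) (hψ : HasDerivAt ψ ψ' ρ)
    (hc : ∀ᶠ r in 𝓝 ρ, G (r, ψ r) = c) : D (1, ψ') = 0 :=
  (hG.comp_hasDerivAt ρ ((hasDerivAt_id ρ).prodMk hψ)).unique
    ((hasDerivAt_const ρ c).congr_of_eventuallyEq hc)

theorem exists_implicit_curve_hasDerivAt {ι : Type*} [Fintype ι] [DecidableEq ι]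
    {G : ℝ × (ι → ℝ) → ι → ℝ} {w : ℝ × (ι → ℝ) → ι → ℝ} {M : ℝ × (ι → ℝ) → Matrix ι ι ℝ}
    {Ω : Set (ℝ × (ι → ℝ))} {ρ₀ : ℝ} {β₀ : ι → ℝ} (hΩ : IsOpen Ω) (hz₀ : (ρ₀, β₀) ∈ Ω)
    (hG : ∀ z ∈ Ω, HasFDerivAt G (jacobianCLM (w z) (M z)) z)
    (hw : ContinuousOn w Ω) (hM : ContinuousOn M Ω)
    (hG₀ : G (ρ₀, β₀) = 0) (hdet : IsUnit (M (ρ₀, β₀)).det) :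
    ∃ ε > 0, ∃ ψ : ℝ → ι → ℝ, ψ ρ₀ = β₀ ∧ ContDiffOn ℝ 1 ψ (Set.Ioo (ρ₀ - ε) (ρ₀ + ε)) ∧
      ∀ ρ ∈ Set.Ioo (ρ₀ - ε) (ρ₀ + ε), (ρ, ψ ρ) ∈ Ω ∧ G (ρ, ψ ρ) = 0 ∧
        HasDerivAt ψ (-((M (ρ, ψ ρ))⁻¹ *ᵥ w (ρ, ψ ρ))) ρ := by
  have hC1 : ContDiffAt ℝ 1 G (ρ₀, β₀) :=
    contDiffAt_one_iff.2 ⟨_, Ω, hΩ.mem_nhds hz₀, continuousOn_jacobianCLM hw hM, hG⟩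
  have hinv : (fderiv ℝ G (ρ₀, β₀) ∘L inr ℝ ℝ (ι → ℝ)).IsInvertible := by
    rw [(hG _ hz₀).fderiv, jacobianCLM_comp_inr]
    exact isInvertible_toLin' hdet
  set ψ := hC1.implicitFunction one_ne_zero hinv
  have hψ₀ : ψ ρ₀ = β₀ := hC1.implicitFunction_apply_self one_ne_zero hinv
  have hψC1 : ContDiffAt ℝ 1 ψ ρ₀ := hC1.contDiffAt_implicitFunction one_ne_zero hinv
  have hgraph : Tendsto (fun ρ => (ρ, ψ ρ)) (𝓝 ρ₀) (𝓝 (ρ₀, β₀)) := by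
    simpa [hψ₀] using (continuousAt_id.prodMk hψC1.continuousAt).tendsto
  have hdet_cont : ContinuousAt (fun z => (M z).det) (ρ₀, β₀) :=
    continuous_id.matrix_det.continuousAt.comp (hM.continuousAt (hΩ.mem_nhds hz₀))
  have hev : ∀ᶠ ρ in 𝓝 ρ₀, (ρ, ψ ρ) ∈ Ω ∧ (M (ρ, ψ ρ)).det ≠ 0 ∧ ContDiffAt ℝ 1 ψ ρ ∧
      ∀ᶠ r in 𝓝 ρ, G (r, ψ r) = 0 := by
    have hsolves := hC1.eventually_apply_implicitFunction one_ne_zero hinv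
    rw [hG₀] at hsolves
    exact (hgraph.eventually (hΩ.mem_nhds hz₀)).and <|
      (hgraph.eventually (hdet_cont.eventually_ne hdet.ne_zero)).and <|
        (hψC1.eventually (by simp)).and hsolves.eventually_nhds
  obtain ⟨ε, hε, hball⟩ := Metric.eventually_nhds_iff_ball.1 hev
  rw [Real.ball_eq_Ioo] at hball
  refine ⟨ε, hε, ψ, hψ₀, fun ρ hρ => (hball ρ hρ).2.2.1.contDiffWithinAt, fun ρ hρ => ?_⟩
  obtain ⟨hΩρ, hdetρ, hψρ, hzero⟩ := hball ρ hρ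
  have hderiv := (hψρ.differentiableAt one_ne_zero).hasDerivAt
  have htangent := (hG _ hΩρ).apply_one_eq_zero_of_eventually_eq hderiv hzero
  rw [jacobianCLM_apply, one_smul] at htangent
  refine ⟨hΩρ, hzero.self_of_nhds, ?_⟩
  rwa [← eq_neg_inv_mulVec_of_add_mulVec_eq_zero (isUnit_iff_ne_zero.2 hdetρ) htangent]

theorem path_following_ode_in_rho_general
    {q : ℕ} (SZ : Finset (Fin q))
    (f : (Fin q → ℝ) → ℝ) (hf : ContDiff ℝ 2 f)
    (I : Set ℝ) (hI : IsOpen I)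
    (Pt Ptt Ptρ : ℝ → ℝ → ℝ)
    (hPtt : ∀ ρ ∈ I, ∀ t : ℝ, 0 < t → HasDerivAt (fun s => Pt s ρ) (Ptt t ρ) t)
    (hPtρ : ∀ t : ℝ, 0 < t → ∀ ρ ∈ I, HasDerivAt (fun r => Pt t r) (Ptρ t ρ) ρ)
    (hPttCont : ContinuousOn (fun z : ℝ × ℝ => Ptt z.1 z.2) (Set.Ioi 0 ×ˢ I))
    (hPtρCont : ContinuousOn (fun z : ℝ × ℝ => Ptρ z.1 z.2) (Set.Ioi 0 ×ˢ I))
    (F : (Fin q → ℝ) → ℝ → Fin q → ℝ)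
    (hF : ∀ β ρ j, F β ρ j =
      fderiv ℝ f β (Pi.single j 1) +
        (if j ∈ SZ then Pt |β j| ρ * Real.sign (β j) else 0))
    (H : (Fin q → ℝ) → ℝ → Matrix (Fin q) (Fin q) ℝ)
    (hH : ∀ β ρ j k, H β ρ j k =
      fderiv ℝ (fun b => fderiv ℝ f b (Pi.single k 1)) β (Pi.single j 1) +
        (if j = k ∧ j ∈ SZ then Ptt |β j| ρ else 0))
    (u : (Fin q → ℝ) → ℝ → Fin q → ℝ)
    (hu : ∀ β ρ j, u β ρ j =
      if j ∈ SZ then Ptρ |β j| ρ * Real.sign (β j) else 0)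
    (ρ₀ : ℝ) (hρ₀ : ρ₀ ∈ I)
    (β₀ : Fin q → ℝ) (hβ₀ : ∀ j ∈ SZ, β₀ j ≠ 0)
    (hstat : F β₀ ρ₀ = 0)
    (hpd : (H β₀ ρ₀).PosDef) :
    ∃ ε > 0, ∃ βc : ℝ → Fin q → ℝ,
      βc ρ₀ = β₀ ∧
      ContDiffOn ℝ 1 βc (Set.Ioo (ρ₀ - ε) (ρ₀ + ε)) ∧
      ∀ ρ ∈ Set.Ioo (ρ₀ - ε) (ρ₀ + ε),
        (∀ j ∈ SZ, βc ρ j ≠ 0) ∧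
        F (βc ρ) ρ = 0 ∧
        HasDerivAt βc (-((H (βc ρ) ρ)⁻¹ *ᵥ u (βc ρ) ρ)) ρ := by
  obtain rfl : F = fun β ρ => coordGradient f β + penaltyGrad SZ Pt β ρ := by
    ext β ρ j
    simp [hF, coordGradient, penaltyGrad]
  obtain rfl : H = fun β ρ => coordHessian f β + diagonal (penaltyCurvature SZ Ptt β ρ) := by
    ext β ρ j k
    by_cases hjk : j = k <;> simp [hH, coordHessian, penaltyCurvature, diagonal, hjk]
  obtain rfl : u = penaltyGrad SZ Ptρ := by
    ext β ρ j
    simp [hu, penaltyGrad]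
  have hHcont : ∀ z ∈ activeDomain SZ I, ContinuousAt
      (fun z : ℝ × (Fin q → ℝ) => coordHessian f z.2 + diagonal (penaltyCurvature SZ Ptt z.2 z.1))
      z := fun z hz =>
    ((continuous_coordHessian hf).continuousAt.comp continuousAt_snd).add
      (continuous_id.matrix_diagonal.continuousAt.comp
        (continuousAt_penaltyCurvature hI hPttCont hz))
  obtain ⟨ε, hε, βc, hβc₀, hC1, hβc⟩ := exists_implicit_curve_hasDerivAt
    (isOpen_activeDomain SZ hI) (show (ρ₀, β₀) ∈ activeDomain SZ I from ⟨hρ₀, hβ₀⟩)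
    (fun z hz => hasFDerivAt_coordGradient_add_penaltyGrad hf.contDiffAt hI hPtt hPtρ
      hPttCont hPtρCont hz)
    (fun z hz => (continuousAt_penaltyGrad hI hPtρCont hz).continuousWithinAt)
    (fun z hz => (hHcont z hz).continuousWithinAt) hstat hpd.det_pos.ne'.isUnit
  exact ⟨ε, hε, βc, hβc₀, hC1, fun ρ hρ => ⟨(hβc ρ hρ).1.2, (hβc ρ hρ).2⟩⟩

/-- Path-following ODE in ρ: For a twice continuously differentiable
loss `f`, a penalty `P(t,ρ)` with continuous second partials `∂²P/∂t²` and `∂²P/∂t∂ρ`,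
and the stationarity map `F(β,ρ)_j = ∂_j f(β) + ∂P/∂t(|β_j|,ρ)·sgn(β_j)` on active
penalized coordinates `j ∈ SZ` (and `F(β,ρ)_j = ∂_j f(β)` on unpenalized coordinates),
if `F(β⁰,ρ₀) = 0` and the restricted Hessian `H(β⁰,ρ₀)` is positive definite, then
there is a continuously differentiable local solution curve `β(ρ)` with `β(ρ₀) = β⁰`,
`F(β(ρ),ρ) = 0`, and `dβ/dρ = −H(β(ρ),ρ)⁻¹·u(β(ρ),ρ)` where
`u_j = ∂²P/∂t∂ρ(|β_j|,ρ)·sgn(β_j)` for `j ∈ SZ` and `u_j = 0` otherwise. -/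
theorem path_following_ode_in_rho
    {q : ℕ} (SZ : Finset (Fin q))
    (f : (Fin q → ℝ) → ℝ) (hf : ContDiff ℝ 2 f)
    (I : Set ℝ) (hI : IsOpen I) (hIconn : I.OrdConnected)
    (P Pt Ptt Ptρ : ℝ → ℝ → ℝ)
    (hPt : ∀ ρ ∈ I, ∀ t : ℝ, 0 < t → HasDerivAt (fun s => P s ρ) (Pt t ρ) t)
    (hPtt : ∀ ρ ∈ I, ∀ t : ℝ, 0 < t → HasDerivAt (fun s => Pt s ρ) (Ptt t ρ) t)
    (hPtρ : ∀ t : ℝ, 0 < t → ∀ ρ ∈ I, HasDerivAt (fun r => Pt t r) (Ptρ t ρ) ρ)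
    (hPttCont : ContinuousOn (fun z : ℝ × ℝ => Ptt z.1 z.2) (Set.Ioi 0 ×ˢ I))
    (hPtρCont : ContinuousOn (fun z : ℝ × ℝ => Ptρ z.1 z.2) (Set.Ioi 0 ×ˢ I))
    (F : (Fin q → ℝ) → ℝ → Fin q → ℝ)
    (hF : ∀ β ρ j, F β ρ j =
      fderiv ℝ f β (Pi.single j 1) +
        (if j ∈ SZ then Pt |β j| ρ * Real.sign (β j) else 0))
    (H : (Fin q → ℝ) → ℝ → Matrix (Fin q) (Fin q) ℝ)
    (hH : ∀ β ρ j k, H β ρ j k =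
      fderiv ℝ (fun b => fderiv ℝ f b (Pi.single k 1)) β (Pi.single j 1) +
        (if j = k ∧ j ∈ SZ then Ptt |β j| ρ else 0))
    (u : (Fin q → ℝ) → ℝ → Fin q → ℝ)
    (hu : ∀ β ρ j, u β ρ j =
      if j ∈ SZ then Ptρ |β j| ρ * Real.sign (β j) else 0)
    (ρ₀ : ℝ) (hρ₀ : ρ₀ ∈ I)
    (β₀ : Fin q → ℝ) (hβ₀ : ∀ j ∈ SZ, β₀ j ≠ 0)
    (hstat : F β₀ ρ₀ = 0)
    (hpd : (H β₀ ρ₀).PosDef) :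
    ∃ ε > 0, ∃ βc : ℝ → Fin q → ℝ,
      βc ρ₀ = β₀ ∧
      ContDiffOn ℝ 1 βc (Set.Ioo (ρ₀ - ε) (ρ₀ + ε)) ∧
      ∀ ρ ∈ Set.Ioo (ρ₀ - ε) (ρ₀ + ε),
        (∀ j ∈ SZ, βc ρ j ≠ 0) ∧
        F (βc ρ) ρ = 0 ∧
        HasDerivAt βc (-((H (βc ρ) ρ)⁻¹ *ᵥ u (βc ρ) ρ)) ρ :=
  path_following_ode_in_rho_general SZ f hf I hI Pt Ptt Ptρ hPtt hPtρ hPttCont hPtρCont F hF H hH u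
    hu ρ₀ hρ₀ β₀ hβ₀ hstat hpd
end
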